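/- Let r > 0 satisfy r² = (15 + 2√30)/35 or r² = (15 − 2√30)/35 (these are the squares of the positive roots of 35s⁴ − 30s² + 3, i.e., of the Gegenbauer polynomial Q_{3,4}). Then the 5-point set X = { (r, √(1−r²)·cos(2kπ/5), √(1−r²)·sin(2kπ/5)) : k = 0, 1, 2, 3, 4 } ⊆ S² ⊆ ℝ³ (a regular pentagon placed on a latitude circle of the sphere) is a spherical design of harmonic index 4 on S² with exactly 5 points. -/

import Mathlib

open scoped BigOperators Classical

/-- The Laplacian `∑ i, ∂²/∂xᵢ²` of a multivariate polynomial. -/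
noncomputable def mvLaplacian {n : ℕ} (f : MvPolynomial (Fin n) ℝ) : MvPolynomial (Fin n) ℝ :=
  ∑ i, MvPolynomial.pderiv i (MvPolynomial.pderiv i f)

/-- A finite nonempty subset `X` of the unit sphere `S^{n-1} ⊆ ℝ^n` is a spherical design of
harmonic index `t` if `∑_{x ∈ X} f(x) = 0` for every harmonic homogeneous polynomial `f`
of degree `t`. -/
def IsHarmonicIndexDesign (n t : ℕ) (X : Finset (Fin n → ℝ)) : Prop :=
  X.Nonempty ∧ (∀ x ∈ X, ∑ i, x i ^ 2 = 1) ∧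
    ∀ f : MvPolynomial (Fin n) ℝ, mvLaplacian f = 0 → f.IsHomogeneous t →
      ∑ x ∈ X, MvPolynomial.eval x f = 0

/-- The regular pentagon placed on the latitude circle of `S²` at height `r`. -/
noncomputable def pentagon (r : ℝ) : Finset (Fin 3 → ℝ) :=
  (Finset.univ : Finset (Fin 5)).image fun k =>
    ![r, Real.sqrt (1 - r ^ 2) * Real.cos (2 * (k : ℝ) * Real.pi / 5),
      Real.sqrt (1 - r ^ 2) * Real.sin (2 * (k : ℝ) * Real.pi / 5)]

namespace PentagonAux

open Real MvPolynomial

lemma cos2pi5 : cos (2*π/5) = (Real.sqrt 5 - 1)/4 := by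
  have h := Real.cos_pi_div_five
  have h2 : cos (2*(π/5)) = 2 * cos (π/5)^2 - 1 := Real.cos_two_mul _
  have h5 : Real.sqrt 5 ^ 2 = 5 := Real.sq_sqrt (by norm_num)
  have e : (2:ℝ)*π/5 = 2*(π/5) := by ring
  rw [e, h2, h]; nlinarith [h5]

lemma cos4pi5 : cos (4*π/5) = -(1 + Real.sqrt 5)/4 := by
  have h2 : cos (2*(2*π/5)) = 2 * cos (2*π/5)^2 - 1 := Real.cos_two_mul _
  have h5 : Real.sqrt 5 ^ 2 = 5 := Real.sq_sqrt (by norm_num)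
  have e : (4:ℝ)*π/5 = 2*(2*π/5) := by ring
  rw [e, h2, cos2pi5]; nlinarith [h5]

noncomputable def Tval : ℕ → ℕ → ℝ
  | 0,0 => 5 | 2,0 => 5/2 | 0,2 => 5/2 | 4,0 => 15/8 | 0,4 => 15/8 | 2,2 => 5/8 | _,_ => 0

lemma sum_expand (b c : ℕ) : (∑ k : Fin 5, cos (2*(k:ℝ)*π/5)^b * sin (2*(k:ℝ)*π/5)^c)
    = 1^b*0^c + cos (2*π/5)^b*sin (2*π/5)^c + cos (4*π/5)^b*sin (4*π/5)^c
      + cos (4*π/5)^b*(-sin (4*π/5))^c + cos (2*π/5)^b*(-sin (2*π/5))^c := by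
  rw [Fin.sum_univ_five]
  have e0 : 2*((0 : Fin 5):ℝ)*π/5 = 0 := by norm_num
  have e1 : 2*((1 : Fin 5):ℝ)*π/5 = 2*π/5 := by norm_num
  have e2 : 2*((2 : Fin 5):ℝ)*π/5 = 4*π/5 := by norm_num
  have e3 : 2*((3 : Fin 5):ℝ)*π/5 = 2*π - 4*π/5 := by
    norm_num [show ((3:Fin 5):ℕ) = 3 from rfl]; ring
  have e4 : 2*((4 : Fin 5):ℝ)*π/5 = 2*π - 2*π/5 := by
    norm_num [show ((4:Fin 5):ℕ) = 4 from rfl]; ring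
  rw [e0, e1, e2, e3, e4, Real.cos_two_pi_sub, Real.sin_two_pi_sub,
    Real.cos_two_pi_sub, Real.sin_two_pi_sub, Real.cos_zero, Real.sin_zero]

set_option maxHeartbeats 2000000 in
lemma sum_cs (b c : ℕ) (h : b + c ≤ 4) :
    (∑ k : Fin 5, cos (2*(k:ℝ)*π/5)^b * sin (2*(k:ℝ)*π/5)^c) = Tval b c := by
  have s1sq : sin (2*π/5)^2 = 1 - cos (2*π/5)^2 := by
    nlinarith [Real.sin_sq_add_cos_sq (2*π/5)]
  have s2sq : sin (4*π/5)^2 = 1 - cos (4*π/5)^2 := by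
    nlinarith [Real.sin_sq_add_cos_sq (4*π/5)]
  rw [sum_expand, cos2pi5, cos4pi5] at *
  have hb : b ≤ 4 := by omega
  have hc : c ≤ 4 := by omega
  interval_cases b <;> interval_cases c <;> norm_num [Tval] <;>
    nlinarith [s1sq, s2sq, Real.sq_sqrt (show (0:ℝ) ≤ 5 by norm_num)]

lemma coeff_pderiv' {n : ℕ} (i : Fin n) (m : Fin n →₀ ℕ) (f : MvPolynomial (Fin n) ℝ) :
    coeff m (pderiv i f) = (m i + 1 : ℝ) * coeff (m + Finsupp.single i 1) f := by
  induction f using MvPolynomial.induction_on' with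
  | add p q hp hq => simp [hp, hq, mul_add]
  | monomial s a =>
    rw [pderiv_monomial, coeff_monomial, coeff_monomial]
    by_cases h : s = m + Finsupp.single i 1
    · subst h
      rw [if_pos (add_tsub_cancel_right _ _), if_pos rfl]
      simp [mul_comm]
    · rw [if_neg h]
      by_cases h2 : s - Finsupp.single i 1 = m
      · rw [if_pos h2]
        by_cases h3 : s i = 0
        · simp [h3]
        · exfalso
          apply h
          rw [← h2, tsub_add_cancel_of_le]
          rwa [Finsupp.single_le_iff, Nat.one_le_iff_ne_zero]
      · simp [h2]

lemma coeff_lap {n : ℕ} (m : Fin n →₀ ℕ) (f : MvPolynomial (Fin n) ℝ) :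
    coeff m (mvLaplacian f)
      = ∑ i : Fin n, ((m i : ℝ) + 1) * ((m i : ℝ) + 2) * coeff (m + Finsupp.single i 2) f := by
  rw [mvLaplacian, MvPolynomial.coeff_sum]
  refine Finset.sum_congr rfl fun i _ => ?_
  rw [coeff_pderiv', coeff_pderiv']
  have h1 : ((m + Finsupp.single i 1 : Fin n →₀ ℕ)) i = m i + 1 := by simp
  have h2 : m + Finsupp.single i 1 + Finsupp.single i 1 = m + Finsupp.single i 2 := by
    rw [add_assoc, ← Finsupp.single_add]
  rw [h1, h2]
  push_cast
  ring

lemma sum_ite_support (f : MvPolynomial (Fin 3) ℝ) (m0 : Fin 3 →₀ ℕ) (v : ℝ) :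
    (∑ m ∈ f.support, if m = m0 then coeff m f * v else 0) = coeff m0 f * v := by
  rw [Finset.sum_ite_eq' f.support m0 (fun m => coeff m f * v)]
  by_cases h : m0 ∈ f.support
  · simp [h]
  · simp [h, MvPolynomial.notMem_support_iff.mp h]

lemma eq_finsupp_iff (m : Fin 3 →₀ ℕ) (a b c : ℕ) :
    m = Finsupp.single 0 a + Finsupp.single 1 b + Finsupp.single 2 c
      ↔ m 0 = a ∧ m 1 = b ∧ m 2 = c := by
  constructor
  · rintro rfl
    refine ⟨?_, ?_, ?_⟩ <;> simp [Finsupp.single_apply]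
  · rintro ⟨h0, h1, h2⟩
    ext i
    fin_cases i <;> simp [Finsupp.single_apply, h0, h1, h2]

end PentagonAux

set_option maxHeartbeats 2000000 in
open Real MvPolynomial PentagonAux in
/-- for `r > 0` with `r² = (15 ± 2√30)/35` (the squares of the positive roots
of `35s⁴ - 30s² + 3`), the regular pentagon on the latitude circle of `S²` at height `r`
is a spherical design of harmonic index `4` with exactly `5` points. -/
theorem pentagon_isHarmonicIndexDesign (r : ℝ) (hr : 0 < r)
    (hr2 : r ^ 2 = (15 + 2 * Real.sqrt 30) / 35 ∨ r ^ 2 = (15 - 2 * Real.sqrt 30) / 35) :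
    IsHarmonicIndexDesign 3 4 (pentagon r) ∧ (pentagon r).card = 5 := by
  have h30 : Real.sqrt 30 ^ 2 = 30 := Real.sq_sqrt (by norm_num)
  have h30nn : (0:ℝ) ≤ Real.sqrt 30 := Real.sqrt_nonneg _
  have h30lt : Real.sqrt 30 < 10 := by nlinarith
  have hq : 35 * r^4 - 30 * r^2 + 3 = 0 := by
    rcases hr2 with h | h <;> · rw [show r^4 = (r^2)^2 by ring, h]; nlinarith
  have hlt1 : r^2 < 1 := by rcases hr2 with h | h <;> nlinarith
  set ρ : ℝ := Real.sqrt (1 - r^2) with hρdef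
  have hρ2 : ρ^2 = 1 - r^2 := Real.sq_sqrt (by nlinarith)
  have hρpos : 0 < ρ := Real.sqrt_pos.mpr (by nlinarith)
  set p : Fin 5 → (Fin 3 → ℝ) := fun k =>
    ![r, ρ * Real.cos (2 * ((k:ℕ) : ℝ) * π / 5), ρ * Real.sin (2 * ((k:ℕ) : ℝ) * π / 5)] with hp
  have hpent : pentagon r = Finset.univ.image p := by
    rw [hp, hρdef, pentagon]
    ext x
    simp [Finset.mem_image]
  -- injectivity of p
  have hinj : Function.Injective p := by
    intro k l hkl
    have hc : Real.cos (2 * (k : ℝ) * π / 5) = Real.cos (2 * (l : ℝ) * π / 5) := by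
      have := congrFun hkl 1
      simp only [hp, Matrix.cons_val_one, Matrix.head_cons] at this
      exact mul_left_cancel₀ (ne_of_gt hρpos) this
    have hs : Real.sin (2 * (k : ℝ) * π / 5) = Real.sin (2 * (l : ℝ) * π / 5) := by
      have := congrFun hkl 2
      simp only [hp] at this
      exact mul_left_cancel₀ (ne_of_gt hρpos) this
    have hexp : Complex.exp ((2 * (k : ℝ) * π / 5 : ℝ) * Complex.I)
        = Complex.exp ((2 * (l : ℝ) * π / 5 : ℝ) * Complex.I) := by
      rw [Complex.exp_mul_I, Complex.exp_mul_I, ← Complex.ofReal_cos, ← Complex.ofReal_sin,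
        ← Complex.ofReal_cos, ← Complex.ofReal_sin, hc, hs]
    obtain ⟨n, hn⟩ := Complex.exp_eq_exp_iff_exists_int.mp hexp
    have hI : ((2 * (k : ℝ) * π / 5 : ℝ) : ℂ) = ((2 * (l : ℝ) * π / 5 + n * (2 * π) : ℝ) : ℂ) := by
      apply mul_right_cancel₀ Complex.I_ne_zero
      rw [hn]; push_cast; ring
    have hR : 2 * (k : ℝ) * π / 5 = 2 * (l : ℝ) * π / 5 + n * (2 * π) :=
      Complex.ofReal_inj.mp hI
    have hpi : (0:ℝ) < π := Real.pi_pos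
    have hkln : (k : ℝ) = (l : ℝ) + 5 * n := by
      field_simp at hR
      nlinarith [hR]
    have hk5 : ((k : ℕ) : ℝ) < 5 := by exact_mod_cast k.isLt
    have hl5 : ((l : ℕ) : ℝ) < 5 := by exact_mod_cast l.isLt
    have hk0 : (0:ℝ) ≤ ((k:ℕ):ℝ) := Nat.cast_nonneg _
    have hl0 : (0:ℝ) ≤ ((l:ℕ):ℝ) := Nat.cast_nonneg _
    have hb1 : (-1:ℝ) < (n:ℝ) := by nlinarith [hkln]
    have hb2 : (n:ℝ) < 1 := by nlinarith [hkln]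
    have hn1 : (-1:ℤ) < n := by exact_mod_cast hb1
    have hn2 : n < (1:ℤ) := by exact_mod_cast hb2
    have hn0 : n = 0 := by omega
    have : ((k:ℕ):ℝ) = ((l:ℕ):ℝ) := by rw [hkln, hn0]; push_cast; ring
    have : (k : ℕ) = (l : ℕ) := by exact_mod_cast this
    exact Fin.ext this
  have hcard : (pentagon r).card = 5 := by
    rw [hpent, Finset.card_image_of_injective _ hinj, Finset.card_univ, Fintype.card_fin]
  refine ⟨⟨?_, ?_, ?_⟩, hcard⟩
  · -- nonempty
    rw [hpent]
    exact ⟨p 0, Finset.mem_image_of_mem _ (Finset.mem_univ 0)⟩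
  · -- on the sphere
    intro x hx
    rw [hpent, Finset.mem_image] at hx
    obtain ⟨k, -, rfl⟩ := hx
    rw [Fin.sum_univ_three]
    simp only [hp, Matrix.cons_val_zero, Matrix.cons_val_one, Matrix.head_cons,
      Matrix.cons_val_two, Matrix.tail_cons]
    have := Real.sin_sq_add_cos_sq (2 * (k : ℝ) * π / 5)
    nlinarith [hρ2, this]
  · -- the design property
    intro f hlap hhom
    rw [hpent, Finset.sum_image (fun a _ b _ h => hinj h)]
    -- rewrite each evaluation
    have heval : ∀ k : Fin 5, eval (p k) f
        = ∑ m ∈ f.support, coeff m f * ∏ i, p k i ^ m i := fun k => eval_eq' (p k) f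
    simp only [heval]
    rw [Finset.sum_comm]
    simp only [← Finset.mul_sum]
    -- degree facts
    have hdeg : ∀ m ∈ f.support, m 0 + m 1 + m 2 = 4 := by
      intro m hm
      have h := hhom (MvPolynomial.mem_support_iff.mp hm)
      have : (Finsupp.weight 1) m = ∑ i : Fin 3, m i := by
        rw [Finsupp.weight_apply]
        rw [Finsupp.sum]
        rw [Finset.sum_subset (Finset.subset_univ _)]
        · simp
        · intro i _ hi
          simp [Finsupp.notMem_support_iff.mp hi]
      rw [this, Fin.sum_univ_three] at h
      exact_mod_cast h
    -- the weight of each monomial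
    have hW : ∀ m ∈ f.support, (∑ k : Fin 5, ∏ i, p k i ^ m i)
        = r ^ (m 0) * ρ ^ (m 1 + m 2) * Tval (m 1) (m 2) := by
      intro m hm
      have hterm : ∀ k : Fin 5, (∏ i, p k i ^ m i)
          = r ^ (m 0) * ρ ^ (m 1 + m 2) *
            (Real.cos (2 * (k : ℝ) * π / 5) ^ (m 1) * Real.sin (2 * (k : ℝ) * π / 5) ^ (m 2)) := by
        intro k
        rw [Fin.prod_univ_three]
        simp only [hp, Matrix.cons_val_zero, Matrix.cons_val_one, Matrix.head_cons,
          Matrix.cons_val_two, Matrix.tail_cons]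
        rw [mul_pow, mul_pow, pow_add]
        ring
      simp only [hterm]
      rw [← Finset.mul_sum, sum_cs (m 1) (m 2) (by have := hdeg m hm; omega)]
    -- the six relevant monomials
    set m400 : Fin 3 →₀ ℕ := Finsupp.single 0 4 + Finsupp.single 1 0 + Finsupp.single 2 0 with hm400
    set m220 : Fin 3 →₀ ℕ := Finsupp.single 0 2 + Finsupp.single 1 2 + Finsupp.single 2 0 with hm220
    set m202 : Fin 3 →₀ ℕ := Finsupp.single 0 2 + Finsupp.single 1 0 + Finsupp.single 2 2 with hm202
    set m040 : Fin 3 →₀ ℕ := Finsupp.single 0 0 + Finsupp.single 1 4 + Finsupp.single 2 0 with hm040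
    set m004 : Fin 3 →₀ ℕ := Finsupp.single 0 0 + Finsupp.single 1 0 + Finsupp.single 2 4 with hm004
    set m022 : Fin 3 →₀ ℕ := Finsupp.single 0 0 + Finsupp.single 1 2 + Finsupp.single 2 2 with hm022
    have hsplit : ∀ m ∈ f.support,
        coeff m f * (∑ k : Fin 5, ∏ i, p k i ^ m i)
          = (if m = m400 then coeff m f * (5 * r^4) else 0)
            + (if m = m220 then coeff m f * (5/2 * (r^2 * (1 - r^2))) else 0)
            + (if m = m202 then coeff m f * (5/2 * (r^2 * (1 - r^2))) else 0)
            + (if m = m040 then coeff m f * (15/8 * (1 - r^2)^2) else 0)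
            + (if m = m004 then coeff m f * (15/8 * (1 - r^2)^2) else 0)
            + (if m = m022 then coeff m f * (5/8 * (1 - r^2)^2) else 0) := by
      intro m hm
      rw [hW m hm]
      have hd := hdeg m hm
      simp only [hm400, hm220, hm202, hm040, hm004, hm022, eq_finsupp_iff]
      have hρ4 : ρ^4 = (1 - r^2)^2 := by rw [show ρ^4 = (ρ^2)^2 by ring, hρ2]
      obtain ⟨a, ha⟩ : ∃ a, a = m 0 := ⟨_, rfl⟩
      obtain ⟨b, hb⟩ : ∃ b, b = m 1 := ⟨_, rfl⟩
      obtain ⟨c, hc⟩ : ∃ c, c = m 2 := ⟨_, rfl⟩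
      rw [← ha, ← hb, ← hc] at hd ⊢
      clear ha hb hc hm hW hdeg heval hlap hhom
      have h0 : a ≤ 4 := by omega
      have h1 : b ≤ 4 := by omega
      have h2 : c ≤ 4 := by omega
      interval_cases a <;> interval_cases b <;> interval_cases c <;>
        first
          | omega
          | (norm_num [Tval, hρ2, hρ4] <;> (first | (left; ring) | ring))
    rw [Finset.sum_congr rfl hsplit]
    simp only [Finset.sum_add_distrib, sum_ite_support]
    -- Laplacian relations
    have hlapc : ∀ m : Fin 3 →₀ ℕ,
        (∑ i : Fin 3, ((m i : ℝ) + 1) * ((m i : ℝ) + 2) * coeff (m + Finsupp.single i 2) f) = 0 := by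
      intro m
      rw [← coeff_lap, hlap, MvPolynomial.coeff_zero]
    have hL0 := hlapc (Finsupp.single 0 2)
    have hL1 := hlapc (Finsupp.single 1 2)
    have hL2 := hlapc (Finsupp.single 2 2)
    rw [Fin.sum_univ_three] at hL0 hL1 hL2
    have e00 : Finsupp.single (0 : Fin 3) 2 + Finsupp.single 0 2 = m400 := by
      rw [hm400]; ext i; fin_cases i <;> simp [Finsupp.single_apply]
    have e01 : Finsupp.single (0 : Fin 3) 2 + Finsupp.single 1 2 = m220 := by
      rw [hm220]; ext i; fin_cases i <;> simp [Finsupp.single_apply]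
    have e02 : Finsupp.single (0 : Fin 3) 2 + Finsupp.single 2 2 = m202 := by
      rw [hm202]; ext i; fin_cases i <;> simp [Finsupp.single_apply]
    have e10 : Finsupp.single (1 : Fin 3) 2 + Finsupp.single 0 2 = m220 := by
      rw [hm220]; ext i; fin_cases i <;> simp [Finsupp.single_apply]
    have e11 : Finsupp.single (1 : Fin 3) 2 + Finsupp.single 1 2 = m040 := by
      rw [hm040]; ext i; fin_cases i <;> simp [Finsupp.single_apply]
    have e12 : Finsupp.single (1 : Fin 3) 2 + Finsupp.single 2 2 = m022 := by
      rw [hm022]; ext i; fin_cases i <;> simp [Finsupp.single_apply]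
    have e20 : Finsupp.single (2 : Fin 3) 2 + Finsupp.single 0 2 = m202 := by
      rw [hm202]; ext i; fin_cases i <;> simp [Finsupp.single_apply]
    have e21 : Finsupp.single (2 : Fin 3) 2 + Finsupp.single 1 2 = m022 := by
      rw [hm022]; ext i; fin_cases i <;> simp [Finsupp.single_apply]
    have e22 : Finsupp.single (2 : Fin 3) 2 + Finsupp.single 2 2 = m004 := by
      rw [hm004]; ext i; fin_cases i <;> simp [Finsupp.single_apply]
    rw [e00, e01, e02] at hL0
    rw [e10, e11, e12] at hL1
    rw [e20, e21, e22] at hL2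
    simp [Finsupp.single_apply] at hL0 hL1 hL2
    set A := coeff m400 f
    set B1 := coeff m220 f
    set B2 := coeff m202 f
    set C1 := coeff m040 f
    set C2 := coeff m004 f
    set D := coeff m022 f
    linear_combination ((5:ℝ)/4*r^2*(1-r^2) - 5/32*(1-r^2)^2) * hL0
      + (5/32:ℝ)*(1-r^2)^2 * hL1 + (5/32:ℝ)*(1-r^2)^2 * hL2 + (5*A/8) * hq
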